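/- arXiv:2107.03822 — 5 statements merged into one kernel-verified Lean document; each statement's English description precedes it below -/
import Mathlib

section
/- For every β ∈ (0,1) and every 0 < s ≤ t, (β/Γ(1−β)) ∫_0^∞ ((1 − e^{−2qs})/2) · ((1 + e^{−2q(t−s)})/2) · q^{−β−1} dq = 2^{β−2} (s^β + t^β − (t−s)^β). Equivalently, the covariance of the Karlin Gaussian process ζ_{2,β} is Cov(ζ_{2,β}(s), ζ_{2,β}(t)) = 2^{β−1}·(1/2)·(1/2)(s^β + t^β − |t−s|^β), identifying ζ_{2,β} as a constant multiple of a fractional Brownian motion with Hurst index β/2. -/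
/-!
Since `e^{-2qs} e^{-2q(t-s)} = e^{-2qt}`, the kernel splits as
`(1 - e^{-2qs})(1 + e^{-2q(t-s)}) = (1 - e^{-2qs}) + (1 - e^{-2qt}) - (1 - e^{-2q(t-s)})`,
so the integral is a combination of three integrals `∫₀^∞ (1 - e^{-aq}) q^{-β-1} dq`.
Integrating by parts against the primitive `-q^{-β}/β` of `q^{-β-1}` turns each of them into
`(a/β) ∫₀^∞ q^{-β} e^{-aq} dq = Γ(1-β) a^β / β`; the boundary terms vanish because
`1 - e^{-aq} ≤ aq` and `β < 1`.
-/

open MeasureTheory Real Set Filter Topology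

lemma one_sub_exp_neg_mul_one_add_exp_neg (x y : ℝ) :
    (1 - exp (-x)) * (1 + exp (-y)) = (1 - exp (-x)) + (1 - exp (-(x + y))) - (1 - exp (-y)) := by
  rw [neg_add, exp_add]
  ring

lemma one_sub_exp_neg_nonneg {x : ℝ} (hx : 0 ≤ x) : 0 ≤ 1 - exp (-x) :=
  sub_nonneg.2 (exp_le_one_iff.2 (neg_nonpos.2 hx))

lemma one_sub_exp_neg_le (x : ℝ) : 1 - exp (-x) ≤ x := by
  linarith [one_sub_le_exp_neg x]

lemma one_sub_exp_neg_mul_mul_rpow_le (a r : ℝ) {q : ℝ} (hq : 0 < q) :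
    (1 - exp (-(a * q))) * q ^ r ≤ a * q ^ (r + 1) := by
  rw [rpow_add_one hq.ne', mul_comm (q ^ r), ← mul_assoc]
  exact mul_le_mul_of_nonneg_right (one_sub_exp_neg_le _) (by positivity)

lemma integrableOn_one_sub_exp_neg_mul_mul_rpow {β a : ℝ} (hβ0 : 0 < β) (hβ1 : β < 1)
    (ha : 0 ≤ a) : IntegrableOn (fun q : ℝ => (1 - exp (-(a * q))) * q ^ (-β - 1)) (Ioi 0) := by
  have hcont : ContinuousOn (fun q : ℝ => (1 - exp (-(a * q))) * q ^ (-β - 1)) (Ioi 0) :=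
    fun q hq => ((continuous_const.sub (by fun_prop)).continuousAt.mul
      (continuousAt_rpow_const _ _ (Or.inl (ne_of_gt hq)))).continuousWithinAt
  have hnorm : ∀ q ∈ Ioi (0 : ℝ),
      ‖(1 - exp (-(a * q))) * q ^ (-β - 1)‖ = (1 - exp (-(a * q))) * q ^ (-β - 1) := by
    intro q (hq : 0 < q)
    exact norm_of_nonneg (mul_nonneg (one_sub_exp_neg_nonneg (by positivity)) (by positivity))
  rw [← Ioc_union_Ioi_eq_Ioi (zero_le_one (α := ℝ))]
  refine IntegrableOn.union ?_ ?_
  · have hbound : IntegrableOn (fun q : ℝ => a * q ^ (-β - 1 + 1)) (Ioc 0 1) :=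
      ((intervalIntegral.intervalIntegrable_rpow' (by linarith)).1).const_mul a
    refine hbound.mono' ((hcont.mono Ioc_subset_Ioi_self).aestronglyMeasurable measurableSet_Ioc)
      ((ae_restrict_iff' measurableSet_Ioc).2 (ae_of_all _ fun q hq => ?_))
    rw [hnorm q hq.1]
    exact one_sub_exp_neg_mul_mul_rpow_le a _ hq.1
  · have hbound : IntegrableOn (fun q : ℝ => q ^ (-β - 1)) (Ioi 1) :=
      integrableOn_Ioi_rpow_of_lt (by linarith) one_pos
    refine hbound.mono' ((hcont.mono (Ioi_subset_Ioi zero_le_one)).aestronglyMeasurable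
      measurableSet_Ioi) ((ae_restrict_iff' measurableSet_Ioi).2 (ae_of_all _ fun q hq => ?_))
    have hq : (0 : ℝ) < q := zero_lt_one.trans hq
    rw [hnorm q hq]
    exact mul_le_of_le_one_left (by positivity) (by linarith [exp_pos (-(a * q))])

lemma tendsto_one_sub_exp_neg_mul_mul_rpow_nhdsGT_zero {β a : ℝ} (hβ1 : β < 1) (ha : 0 ≤ a) :
    Tendsto (fun q : ℝ => (1 - exp (-(a * q))) * q ^ (-β)) (𝓝[>] 0) (𝓝 0) := by
  have hbound : Tendsto (fun q : ℝ => a * q ^ (-β + 1)) (𝓝[>] 0) (𝓝 0) := by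
    have := ((continuousAt_rpow_const 0 (-β + 1) (Or.inr (by linarith))).const_mul a).tendsto
    rw [zero_rpow (by linarith), mul_zero] at this
    exact this.mono_left nhdsWithin_le_nhds
  refine squeeze_zero' ?_ ?_ hbound
  · filter_upwards [self_mem_nhdsWithin] with q (hq : 0 < q)
    exact mul_nonneg (one_sub_exp_neg_nonneg (by positivity)) (by positivity)
  · filter_upwards [self_mem_nhdsWithin] with q (hq : 0 < q)
    exact one_sub_exp_neg_mul_mul_rpow_le a _ hq

lemma integral_one_sub_exp_neg_mul_mul_rpow {β a : ℝ} (hβ0 : 0 < β) (hβ1 : β < 1) (ha : 0 ≤ a) :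
    ∫ q in Ioi (0 : ℝ), (1 - exp (-(a * q))) * q ^ (-β - 1) = Gamma (1 - β) / β * a ^ β := by
  rcases ha.eq_or_lt with rfl | ha
  · simp [zero_rpow hβ0.ne']
  have hu : ∀ q ∈ Ioi (0 : ℝ), HasDerivAt (fun q => 1 - exp (-(a * q))) (exp (-(a * q)) * a) q :=
    fun q _ => by simpa using (((hasDerivAt_id q).const_mul a).neg.exp).const_sub 1
  have hv : ∀ q ∈ Ioi (0 : ℝ), HasDerivAt (fun q => q ^ (-β) / -β) (q ^ (-β - 1)) q :=
    fun q hq => by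
      simpa [hβ0.ne'] using (hasDerivAt_rpow_const (p := -β) (Or.inl (ne_of_gt hq))).div_const (-β)
  have hGamma : ∫ q in Ioi (0 : ℝ), q ^ (-β) * exp (-(a * q)) = (1 / a) ^ (1 - β) * Gamma (1 - β) := by
    simpa only [sub_sub_cancel_left] using
      integral_rpow_mul_exp_neg_mul_Ioi (a := 1 - β) (by linarith) ha
  have hGamma_pos : 0 < Gamma (1 - β) := Gamma_pos_of_pos (by linarith)
  have hu'v : IntegrableOn (fun q => exp (-(a * q)) * a * (q ^ (-β) / -β)) (Ioi 0) := by
    have : IntegrableOn (fun q => q ^ (-β) * exp (-(a * q))) (Ioi 0) :=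
      .of_integral_ne_zero (by rw [hGamma]; positivity)
    refine IntegrableOn.congr_fun (this.const_mul (-(a / β))) (fun q _ => ?_) measurableSet_Ioi
    ring
  have h_zero : Tendsto (fun q => (1 - exp (-(a * q))) * (q ^ (-β) / -β)) (𝓝[>] 0) (𝓝 0) := by
    simpa [mul_div_assoc] using
      (tendsto_one_sub_exp_neg_mul_mul_rpow_nhdsGT_zero hβ1 ha.le).div_const (-β)
  have h_infty : Tendsto (fun q => (1 - exp (-(a * q))) * (q ^ (-β) / -β)) atTop (𝓝 0) := by
    have hexp : Tendsto (fun q => exp (-(a * q))) atTop (𝓝 0) :=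
      tendsto_exp_atBot.comp (tendsto_neg_atTop_atBot.comp (tendsto_id.const_mul_atTop ha))
    simpa using (tendsto_const_nhds.sub hexp).mul ((tendsto_rpow_neg_atTop hβ0).div_const (-β))
  have hu'v_eq : ∫ q in Ioi (0 : ℝ), exp (-(a * q)) * a * (q ^ (-β) / -β)
      = -(a / β) * ∫ q in Ioi (0 : ℝ), q ^ (-β) * exp (-(a * q)) := by
    rw [← integral_const_mul]
    exact setIntegral_congr_fun measurableSet_Ioi (fun q _ => by ring)
  have hpow : a * a ^ (-(1 - β)) = a ^ β := by
    rw [← rpow_one_add' ha.le (by linarith)]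
    ring_nf
  rw [integral_Ioi_mul_deriv_eq_deriv_mul hu hv
      (integrableOn_one_sub_exp_neg_mul_mul_rpow hβ0 hβ1 ha.le) hu'v h_zero h_infty,
    hu'v_eq, hGamma, one_div, inv_rpow ha.le, ← rpow_neg ha.le, ← hpow]
  ring

/-- Covariance computation for the Karlin Gaussian process:
for `β ∈ (0,1)` and `0 < s ≤ t`,
`(β/Γ(1−β)) ∫_0^∞ ((1−e^{−2qs})/2)((1+e^{−2q(t−s)})/2) q^{−β−1} dq
  = 2^{β−2}(s^β + t^β − (t−s)^β)`,
identifying `ζ_{2,β}` as a constant multiple of fractional Brownian motion with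
Hurst index `β/2`. -/
theorem karlin_gaussian_covariance (β : ℝ) (hβ : β ∈ Set.Ioo (0:ℝ) 1)
    (s t : ℝ) (hs : 0 < s) (hst : s ≤ t) :
    β / Real.Gamma (1 - β) *
      ∫ q in Set.Ioi (0:ℝ),
        ((1 - Real.exp (-(2 * q * s))) / 2) * ((1 + Real.exp (-(2 * q * (t - s)))) / 2) *
          q ^ (-β - 1)
      = 2 ^ (β - 2) * (s ^ β + t ^ β - (t - s) ^ β) := by
  obtain ⟨hβ0, hβ1⟩ := hβ
  set F : ℝ → ℝ → ℝ := fun a q => (1 - exp (-(a * q))) * q ^ (-β - 1)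
  have hsplit : ∀ q : ℝ,
      ((1 - exp (-(2 * q * s))) / 2) * ((1 + exp (-(2 * q * (t - s)))) / 2) * q ^ (-β - 1)
        = (F (2 * s) q + F (2 * t) q - F (2 * (t - s)) q) / 4 := by
    intro q
    have key := one_sub_exp_neg_mul_one_add_exp_neg (2 * s * q) (2 * (t - s) * q)
    rw [show 2 * s * q + 2 * (t - s) * q = 2 * t * q by ring] at key
    rw [mul_right_comm 2 q s, mul_right_comm 2 q (t - s)]
    linear_combination (q ^ (-β - 1) / 4) * key
  have h2s : (0 : ℝ) ≤ 2 * s := by linarith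
  have h2t : (0 : ℝ) ≤ 2 * t := by linarith
  have hts : 0 ≤ t - s := sub_nonneg.2 hst
  have h2ts : (0 : ℝ) ≤ 2 * (t - s) := by linarith
  have hint := fun a (ha : 0 ≤ a) => integrableOn_one_sub_exp_neg_mul_mul_rpow hβ0 hβ1 ha
  simp_rw [hsplit]
  rw [integral_div, integral_sub (f := fun q => F (2 * s) q + F (2 * t) q)
      ((hint _ h2s).add (hint _ h2t)) (hint _ h2ts), integral_add (hint _ h2s) (hint _ h2t)]
  simp only [integral_one_sub_exp_neg_mul_mul_rpow hβ0 hβ1 h2s,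
    integral_one_sub_exp_neg_mul_mul_rpow hβ0 hβ1 h2t,
    integral_one_sub_exp_neg_mul_mul_rpow hβ0 hβ1 h2ts]
  rw [mul_rpow zero_le_two hs.le, mul_rpow zero_le_two (by linarith),
    mul_rpow zero_le_two hts, rpow_sub two_pos, rpow_two]
  have hΓ : Gamma (1 - β) ≠ 0 := (Gamma_pos_of_pos (by linarith)).ne'
  field_simp
  ring
end

section
/- Fix 0 < t_1 < t_2 ≤ 1 and ε > 0. For n ≥ 1 and q ∈ (0, ε], set f_n(q) = (1 − (1 − 2q/n)^{⌊nt_1⌋}) (1 + (1 − 2q/n)^{⌊nt_2⌋−⌊nt_1⌋}) and f(q) = (1 − e^{−2qt_1})(1 + e^{−2q(t_2−t_1)}). Then lim_{n→∞} sup_{q ∈ (0,ε]} | f_n(q)/f(q) − 1 | = 0. -/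
lemma aux_log_bound {x : ℝ} (hx0 : 0 ≤ x) (hx : x ≤ 1/2) :
    |Real.log (1 - x) + x| ≤ 2 * x^2 := by
  have h1x : (0:ℝ) < 1 - x := by linarith
  have hup : Real.log (1 - x) ≤ -x := by
    have := Real.log_le_sub_one_of_pos h1x; linarith
  have hlo : -x - 2*x^2 ≤ Real.log (1 - x) := by
    rw [Real.le_log_iff_exp_le h1x]
    have h1 := Real.add_one_le_exp (x + 2*x^2)
    have h2 : Real.exp (-x - 2*x^2) = 1 / Real.exp (x + 2*x^2) := by
      rw [eq_div_iff (Real.exp_pos _).ne', ← Real.exp_add]; ring_nf; exact Real.exp_zero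
    rw [h2]
    rw [div_le_iff₀ (Real.exp_pos _)]
    nlinarith [Real.exp_pos (x + 2*x^2)]
  rw [abs_le]; constructor <;> nlinarith

lemma aux_exp_lip {a b : ℝ} (ha : a ≤ 0) (hb : b ≤ 0) :
    |Real.exp a - Real.exp b| ≤ |a - b| := by
  wlog h : a ≤ b generalizing a b
  · rw [abs_sub_comm, abs_sub_comm a b]; exact this hb ha (le_of_not_ge h)
  have h1 := Real.add_one_le_exp (a - b)
  have h2 : Real.exp b ≤ 1 := Real.exp_le_one_iff.mpr hb
  have h3 : Real.exp (a - b) * Real.exp b = Real.exp a := by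
    rw [← Real.exp_add]; ring_nf
  have h4 : Real.exp a ≤ Real.exp b := Real.exp_le_exp.mpr h
  have hpos := Real.exp_pos b
  rw [abs_of_nonpos (by linarith), abs_of_nonpos (by linarith)]
  nlinarith

lemma aux_denom {y : ℝ} (hy : 0 ≤ y) : y / (1 + y) ≤ 1 - Real.exp (-y) := by
  have h1 := Real.add_one_le_exp y
  have h2 : Real.exp (-y) * Real.exp y = 1 := by rw [← Real.exp_add]; simp
  have hpos := Real.exp_pos y
  rw [div_le_iff₀ (by linarith)]
  nlinarith

lemma aux_key {n j : ℕ} {q r : ℝ} (hq : 0 < q) (hn : (0:ℝ) < n)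
    (hx : 2*q/n ≤ 1/2) (hj : (j:ℝ) ≤ n) (hjr : |(j:ℝ) - n*r| ≤ 2) (hr : 0 ≤ r) :
    |(1 - 2*q/n)^j - Real.exp (-(2*q*r))| ≤ q*(8*q + 4)/n := by
  set x : ℝ := 2*q/n with hxdef
  have hx0 : 0 < x := by positivity
  have h1x : (0:ℝ) < 1 - x := by linarith
  have h1x1 : 1 - x ≤ 1 := by linarith
  set L : ℝ := Real.log (1 - x) with hLdef
  have hL : L ≤ 0 := Real.log_nonpos (by linarith) h1x1
  have hpow : (1 - x)^j = Real.exp ((j:ℝ) * L) := by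
    rw [Real.exp_nat_mul, Real.exp_log h1x]
  rw [hpow]
  have hlip := aux_exp_lip (a := (j:ℝ)*L) (b := -(2*q*r))
    (mul_nonpos_of_nonneg_of_nonpos (Nat.cast_nonneg j) hL) (by positivity |> neg_nonpos_of_nonneg)
  refine le_trans (hlip) ?_
  have hlog := aux_log_bound (le_of_lt hx0) hx
  -- jL - (-(2qr)) = j(L+x) + (2q/n)(n r - j)
  have hsplit : (j:ℝ)*L - (-(2*q*r)) = (j:ℝ)*(L + x) + x*((n:ℝ)*r - j) := by
    rw [hxdef]; field_simp; ring
  rw [hsplit]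
  have h1 : |(j:ℝ)*(L + x)| ≤ (n:ℝ) * (2*x^2) := by
    rw [abs_mul, abs_of_nonneg (Nat.cast_nonneg j)]
    exact mul_le_mul hj hlog (abs_nonneg _) (by positivity)
  have h2 : |x*((n:ℝ)*r - j)| ≤ x * 2 := by
    rw [abs_mul, abs_of_pos hx0]
    have : |(n:ℝ)*r - j| ≤ 2 := by rw [abs_sub_comm]; exact hjr
    exact mul_le_mul_of_nonneg_left this (le_of_lt hx0)
  have hb : (n:ℝ) * (2*x^2) + x * 2 = q*(8*q + 4)/n := by
    rw [hxdef]; field_simp; ring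
  calc |(j:ℝ)*(L + x) + x*((n:ℝ)*r - j)| ≤ |(j:ℝ)*(L + x)| + |x*((n:ℝ)*r - j)| := abs_add_le _ _
    _ ≤ (n:ℝ) * (2*x^2) + x * 2 := add_le_add h1 h2
    _ = q*(8*q + 4)/n := hb

set_option maxHeartbeats 1000000 in
/-- Uniform convergence on `(0,ε]` of the ratio of the binomial two-dimensional
odd-parity probability factor
`f_n(q) = (1 − (1 − 2q/n)^{⌊nt₁⌋})(1 + (1 − 2q/n)^{⌊nt₂⌋−⌊nt₁⌋})`
to its Poisson counterpart `f(q) = (1 − e^{−2qt₁})(1 + e^{−2q(t₂−t₁)})`: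
`lim_{n→∞} sup_{q ∈ (0,ε]} |f_n(q)/f(q) − 1| = 0`. -/
theorem bernoulli_poisson_ratio_uniform (t₁ t₂ ε : ℝ)
    (ht₁ : 0 < t₁) (ht₁₂ : t₁ < t₂) (ht₂ : t₂ ≤ 1) (hε : 0 < ε) :
    ∀ δ > 0, ∃ N : ℕ, ∀ n ≥ N, ∀ q ∈ Set.Ioc (0:ℝ) ε,
      |(1 - (1 - 2 * q / (n : ℝ)) ^ (Nat.floor ((n : ℝ) * t₁))) *
          (1 + (1 - 2 * q / (n : ℝ)) ^ (Nat.floor ((n : ℝ) * t₂) - Nat.floor ((n : ℝ) * t₁))) /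
        ((1 - Real.exp (-(2 * q * t₁))) * (1 + Real.exp (-(2 * q * (t₂ - t₁))))) - 1| ≤ δ := by
  intro δ hδ
  refine ⟨max (⌈4*ε⌉₊ + 1) (⌈3*(8*ε+4)*(1+2*ε*t₁)/(2*t₁*δ)⌉₊ + 1), fun n hn q hq => ?_⟩
  obtain ⟨hq0, hqε⟩ := hq
  have hn1 : (⌈4*ε⌉₊ + 1 : ℕ) ≤ n := le_trans (le_max_left _ _) hn
  have hn2 : (⌈3*(8*ε+4)*(1+2*ε*t₁)/(2*t₁*δ)⌉₊ + 1 : ℕ) ≤ n := le_trans (le_max_right _ _) hn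
  have hn4ε : 4*ε ≤ (n:ℝ) := by
    have h := Nat.ceil_le.mp (le_trans (Nat.le_succ _) hn1)
    exact h
  have hnD : 3*(8*ε+4)*(1+2*ε*t₁)/(2*t₁*δ) ≤ (n:ℝ) := by
    exact Nat.ceil_le.mp (le_trans (Nat.le_succ _) hn2)
  have hnpos : (0:ℝ) < n := by linarith
  have hx : 2*q/(n:ℝ) ≤ 1/2 := by
    rw [div_le_iff₀ hnpos]; nlinarith
  have ht₁1 : t₁ ≤ 1 := by linarith
  -- floor facts
  set k := Nat.floor ((n:ℝ) * t₁) with hk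
  set K := Nat.floor ((n:ℝ) * t₂) with hK
  have hnt₁ : (0:ℝ) ≤ (n:ℝ)*t₁ := by positivity
  have hnt₂ : (0:ℝ) ≤ (n:ℝ)*t₂ := by nlinarith
  have hk_le : (k:ℝ) ≤ (n:ℝ)*t₁ := Nat.floor_le hnt₁
  have hk_gt : (n:ℝ)*t₁ < (k:ℝ) + 1 := Nat.lt_floor_add_one _
  have hK_le : (K:ℝ) ≤ (n:ℝ)*t₂ := Nat.floor_le hnt₂
  have hK_gt : (n:ℝ)*t₂ < (K:ℝ) + 1 := Nat.lt_floor_add_one _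
  have hkK : k ≤ K := Nat.floor_le_floor (by nlinarith)
  have hm_cast : ((K - k : ℕ) : ℝ) = (K:ℝ) - (k:ℝ) := Nat.cast_sub hkK
  have hj1 : (k:ℝ) ≤ (n:ℝ) := by nlinarith
  have hm_le : ((K - k : ℕ):ℝ) ≤ (n:ℝ) := by rw [hm_cast]; nlinarith
  have hjr1 : |(k:ℝ) - (n:ℝ)*t₁| ≤ 2 := by rw [abs_le]; constructor <;> linarith
  have hjr2 : |((K - k : ℕ):ℝ) - (n:ℝ)*(t₂ - t₁)| ≤ 2 := by
    have he : (n:ℝ)*(t₂ - t₁) = (n:ℝ)*t₂ - (n:ℝ)*t₁ := by ring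
    rw [hm_cast, he, abs_le]; constructor <;> linarith
  have hA := aux_key (n := n) (j := k) (r := t₁) hq0 hnpos hx hj1 hjr1 ht₁.le
  have hB := aux_key (n := n) (j := K - k) (r := t₂ - t₁) hq0 hnpos hx hm_le hjr2
    (by linarith)
  -- notation
  set Pk := (1 - 2*q/(n:ℝ))^k with hPk
  set Pm := (1 - 2*q/(n:ℝ))^(K - k) with hPm
  set Ea := Real.exp (-(2*q*t₁)) with hEa
  set Eb := Real.exp (-(2*q*(t₂ - t₁))) with hEb
  have hEapos : 0 < Ea := Real.exp_pos _
  have hEbpos : 0 < Eb := Real.exp_pos _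
  have hEa1 : Ea < 1 := Real.exp_lt_one_iff.mpr (by nlinarith)
  have hEb1 : Eb ≤ 1 := Real.exp_le_one_iff.mpr (by nlinarith)
  have hbase0 : (0:ℝ) ≤ 1 - 2*q/(n:ℝ) := by linarith
  have hbase1 : 1 - 2*q/(n:ℝ) ≤ 1 := by
    have : 0 < 2*q/(n:ℝ) := by positivity
    linarith
  have hPm0 : 0 ≤ Pm := pow_nonneg hbase0 _
  have hPm1 : Pm ≤ 1 := pow_le_one₀ hbase0 hbase1
  have hApos : 0 < 1 - Ea := by linarith
  have hBlb : 1 ≤ 1 + Eb := by linarith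
  have hfpos : 0 < (1 - Ea) * (1 + Eb) := by nlinarith
  -- denominator lower bound
  have hP : (0:ℝ) < 1 + 2*ε*t₁ := by positivity
  have hden1 : 2*q*t₁/(1 + 2*q*t₁) ≤ 1 - Ea := aux_denom (by positivity)
  have hden2 : 2*q*t₁/(1 + 2*ε*t₁) ≤ 2*q*t₁/(1 + 2*q*t₁) := by
    gcongr
    all_goals nlinarith
  have hA_lb : 2*q*t₁/(1 + 2*ε*t₁) ≤ 1 - Ea := le_trans hden2 hden1
  -- goal manipulation
  rw [div_sub_one (ne_of_gt hfpos), abs_div, abs_of_pos hfpos, div_le_iff₀ hfpos]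
  have hid : (1 - Pk)*(1 + Pm) - (1 - Ea)*(1 + Eb)
      = (Ea - Pk)*(1 + Pm) + (1 - Ea)*(Pm - Eb) := by ring
  rw [hid]
  have habs1 : |(Ea - Pk)*(1 + Pm)| ≤ (q*(8*q+4)/(n:ℝ)) * 2 := by
    rw [abs_mul, abs_of_nonneg (by linarith : (0:ℝ) ≤ 1 + Pm)]
    have h1 : |Ea - Pk| ≤ q*(8*q+4)/(n:ℝ) := by rw [abs_sub_comm]; exact hA
    have h2 : 1 + Pm ≤ 2 := by linarith
    exact mul_le_mul h1 h2 (by linarith) (by positivity)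
  have habs2 : |(1 - Ea)*(Pm - Eb)| ≤ 1 * (q*(8*q+4)/(n:ℝ)) := by
    rw [abs_mul, abs_of_pos hApos]
    exact mul_le_mul (by linarith) hB (abs_nonneg _) one_pos.le
  have hclear : 3*(8*ε+4)*(1+2*ε*t₁) ≤ 2*t₁*δ*(n:ℝ) := by
    rw [div_le_iff₀ (by positivity)] at hnD; linarith
  have step1 : (q*(8*q+4)/(n:ℝ))*2 + 1*(q*(8*q+4)/(n:ℝ)) ≤ δ*(2*q*t₁/(1 + 2*ε*t₁)) := by
    have h3 : (q*(8*q+4)/(n:ℝ))*2 + 1*(q*(8*q+4)/(n:ℝ)) = 3*(q*(8*q+4))/(n:ℝ) := by ring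
    rw [h3, mul_div_assoc', div_le_div_iff₀ hnpos hP]
    have e1 : 3*(q*(8*q+4)) ≤ q*(3*(8*ε+4)) := by
      nlinarith [mul_le_mul_of_nonneg_left hqε hq0.le]
    have e2 := mul_le_mul_of_nonneg_left hclear hq0.le
    calc 3*(q*(8*q+4))*(1+2*ε*t₁)
        ≤ q*(3*(8*ε+4))*(1+2*ε*t₁) := mul_le_mul_of_nonneg_right e1 hP.le
      _ = q*(3*(8*ε+4)*(1+2*ε*t₁)) := by ring
      _ ≤ q*(2*t₁*δ*(n:ℝ)) := e2
      _ = δ*(2*q*t₁)*(n:ℝ) := by ring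
  have step2 : δ*(2*q*t₁/(1 + 2*ε*t₁)) ≤ δ * ((1 - Ea)*(1 + Eb)) := by
    apply mul_le_mul_of_nonneg_left _ hδ.le
    calc 2*q*t₁/(1 + 2*ε*t₁) ≤ 1 - Ea := hA_lb
      _ ≤ (1 - Ea)*(1 + Eb) := by nlinarith [mul_pos hApos hEbpos]
  calc |(Ea - Pk)*(1 + Pm) + (1 - Ea)*(Pm - Eb)|
      ≤ |(Ea - Pk)*(1 + Pm)| + |(1 - Ea)*(Pm - Eb)| := abs_add_le _ _
    _ ≤ (q*(8*q+4)/(n:ℝ))*2 + 1*(q*(8*q+4)/(n:ℝ)) := add_le_add habs1 habs2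
    _ ≤ δ*(2*q*t₁/(1 + 2*ε*t₁)) := step1
    _ ≤ δ * ((1 - Ea)*(1 + Eb)) := step2
end

section
/- Under the stated assumptions, for every integer k ≥ 1, all 0 < a < b and every x > 0, lim_{n→∞} m_n ∫_{a/n}^{b/n} C(n,k) q^k (1−q)^{n−k} · F̄(a_n q^{1/α'} x) · q^{−ρ} L(1/q) dq = x^{−α} · (β/Γ(1−β)) ∫_a^b e^{−u} u^{k−1−β}/k! du. (This is the key computation behind the conditional limit: given the exceedance event, (τ_n, nq) converges jointly to (Q_β, G(Q_β − β)).) -/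
/-!
After the substitution `q = u / n`, the integrand multiplied by `m n / n` factors as the binomial
probability `C(n,k) (u/n)^k (1 - u/n)^(n-k)`, which tends to the Poisson weight `e^{-u} u^k / k!`;
`F̄(t) t^α` with `t = a_n (u/n)^{1/α'} x → ∞`, which tends to `C_X`; the fixed function
`x^{-α} u^{-1-β} β / (C_X Γ(1-β))`; and `L(n/u) / L(n)`, which tends to `1`. The normalisation
`a_n` is chosen precisely so that all powers of `n`, `m_n` and `L(n)` cancel. For large `n` every
factor is bounded uniformly in `u ∈ (c₁, c₂]` (for the last one this is the uniform convergence
theorem for slowly varying functions, proved with Egorov's theorem), so bounded convergence gives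
the limit.
-/

open Filter Set MeasureTheory Topology

def SlowlyVarying (L : ℝ → ℝ) : Prop :=
  ∀ c : ℝ, 0 < c → Tendsto (fun x : ℝ => L (c * x) / L x) atTop (𝓝 1)

lemma exists_mem_notMem_and_add_notMem {I E : Set ℝ} (v : ℝ) (h : 2 * volume E < volume I) :
    ∃ w ∈ I, w ∉ E ∧ w + v ∉ E := by
  by_contra! hcover
  have hsub : I ⊆ E ∪ (· + v) ⁻¹' E := fun w hw => by
    by_cases hwE : w ∈ E
    · exact Or.inl hwE
    · exact Or.inr (hcover w hw hwE)
  have : volume I ≤ 2 * volume E := calc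
    volume I ≤ volume E + volume ((· + v) ⁻¹' E) :=
      (measure_mono hsub).trans (measure_union_le _ _)
    _ = 2 * volume E := by rw [measure_preimage_add_right, two_mul]
  exact this.not_gt h

/- Egorov's theorem makes `|h (t j + w) - h (t j)|` and `|h (t j + v j + w) - h (t j + v j)|`
uniformly small for `w ∈ [0, 3N]` outside a set `E` of measure `≤ N / 3`; a point `w` with
`w, w + v j ∉ E` then links `h (t j)` to `h (t j + v j)`. -/
theorem tendsto_sub_of_tendsto_sub_of_mem_Icc {h : ℝ → ℝ} (hh : Measurable h)
    (hlim : ∀ v, Tendsto (fun t => h (t + v) - h t) atTop (𝓝 0)) {M : ℝ} {t v : ℕ → ℝ}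
    (ht : Tendsto t atTop atTop) (hv : ∀ j, v j ∈ Icc (-M) M) :
    Tendsto (fun j => h (t j + v j) - h (t j)) atTop (𝓝 0) := by
  set N := |M| + 1
  have hN : 0 < N := by positivity
  set φ : ℕ → ℝ → ℝ := fun j w =>
    |h (t j + w) - h (t j)| + |h (t j + v j + w) - h (t j + v j)|
  have hφlim : ∀ w, Tendsto (φ · w) atTop (𝓝 0) := fun w => by
    have htv : Tendsto (fun j => t j + v j) atTop atTop :=
      tendsto_atTop_add_right_of_le _ (-M) ht fun j => (hv j).1
    simpa using ((hlim w).comp ht).abs.add ((hlim w).comp htv).abs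
  obtain ⟨E, -, -, hE, hunif⟩ := tendstoUniformlyOn_of_ae_tendsto (μ := volume)
    (s := Icc 0 (3 * N)) (fun j => by fun_prop) stronglyMeasurable_const measurableSet_Icc
    measure_Icc_lt_top.ne (ae_of_all _ fun w _ => hφlim w) (by positivity : 0 < N / 3)
  have hmeasure : 2 * volume E < volume (Icc N (2 * N)) := by
    rw [Real.volume_Icc]
    calc 2 * volume E ≤ 2 * ENNReal.ofReal (N / 3) := by gcongr
      _ = ENNReal.ofReal (2 * (N / 3)) := by
        rw [ENNReal.ofReal_mul zero_le_two, ENNReal.ofReal_ofNat]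
      _ < ENNReal.ofReal (2 * N - N) :=
        (ENNReal.ofReal_lt_ofReal_iff (by linarith)).mpr (by linarith)
  rw [Metric.tendsto_atTop]
  intro ε hε
  obtain ⟨J, hJ⟩ := eventually_atTop.mp
    (Metric.tendstoUniformlyOn_iff.mp hunif (ε / 2) (by positivity))
  refine ⟨J, fun j hj => ?_⟩
  obtain ⟨w, hwI, hwE, hwvE⟩ := exists_mem_notMem_and_add_notMem (v j) hmeasure
  have hvj : -N ≤ v j ∧ v j ≤ N :=
    ⟨by linarith [(hv j).1, le_abs_self M], by linarith [(hv j).2, le_abs_self M]⟩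
  have hsmall : ∀ w' ∈ Icc 0 (3 * N), w' ∉ E → φ j w' < ε / 2 := fun w' hw' hw'E => by
    have := hJ j hj w' ⟨hw', hw'E⟩
    rwa [dist_zero_left, Real.norm_eq_abs, abs_of_nonneg (by positivity)] at this
  have hsplit : h (t j + v j) - h (t j) =
      (h (t j + (w + v j)) - h (t j)) - (h (t j + v j + w) - h (t j + v j)) := by
    rw [show t j + v j + w = t j + (w + v j) by ring]
    ring
  calc dist (h (t j + v j) - h (t j)) 0 = |h (t j + v j) - h (t j)| := by
        rw [Real.dist_eq, sub_zero]
    _ ≤ φ j (w + v j) + φ j w := by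
      rw [hsplit]
      exact (abs_sub _ _).trans (add_le_add (le_add_of_nonneg_right (abs_nonneg _))
        (le_add_of_nonneg_left (abs_nonneg _)))
    _ < ε / 2 + ε / 2 := add_lt_add
        (hsmall _ ⟨by linarith [hwI.1], by linarith [hwI.2]⟩ hwvE)
        (hsmall _ ⟨by linarith [hwI.1], by linarith [hwI.2]⟩ hwE)
    _ = ε := add_halves ε

theorem tendstoUniformlyOn_sub_of_tendsto_sub {h : ℝ → ℝ} (hh : Measurable h)
    (hlim : ∀ v, Tendsto (fun t => h (t + v) - h t) atTop (𝓝 0)) (M : ℝ) :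
    TendstoUniformlyOn (fun t v => h (t + v) - h t) 0 atTop (Icc (-M) M) := by
  rw [Metric.tendstoUniformlyOn_iff]
  intro ε hε
  by_contra hfails
  have hseq : ∀ j : ℕ, ∃ t ≥ (j : ℝ), ∃ v ∈ Icc (-M) M, ε ≤ |h (t + v) - h t| := fun j => by
    obtain ⟨t, ht, hfar⟩ := frequently_atTop.mp (not_eventually.mp hfails) j
    push Not at hfar
    obtain ⟨v, hv, hfar⟩ := hfar
    exact ⟨t, ht, v, hv, by simpa [dist_comm, Real.dist_eq] using hfar⟩
  choose t ht v hv hfar using hseq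
  obtain ⟨j, hj⟩ := ((tendsto_sub_of_tendsto_sub_of_mem_Icc hh hlim
    (tendsto_atTop_mono ht tendsto_natCast_atTop_atTop) hv).abs.eventually
      (gt_mem_nhds (by simpa using hε))).exists
  exact (hfar j).not_gt hj

theorem SlowlyVarying.tendstoUniformlyOn {L : ℝ → ℝ} (hL : SlowlyVarying L)
    (hmeas : Measurable L) (hpos : ∀ x, 0 < x → 0 < L x) {A : ℝ} (hA : 0 < A) (B : ℝ) :
    TendstoUniformlyOn (fun y c => L (c * y) / L y) 1 atTop (Icc A B) := by
  set h : ℝ → ℝ := fun t => Real.log (L (Real.exp t))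
  have hratio : ∀ t v, L (Real.exp v * Real.exp t) / L (Real.exp t) =
      Real.exp (h (t + v) - h t) := fun t v => by
    rw [Real.exp_sub, Real.exp_log (hpos _ (Real.exp_pos _)),
      Real.exp_log (hpos _ (Real.exp_pos _)), Real.exp_add, mul_comm]
  have hlim : ∀ v, Tendsto (fun t => h (t + v) - h t) atTop (𝓝 0) := fun v => by
    simpa [Function.comp_def, hratio] using (Real.continuousAt_log one_ne_zero).tendsto.comp
      ((hL _ (Real.exp_pos v)).comp Real.tendsto_exp_atTop)
  set M := |Real.log A| + |Real.log B|
  have hunif := tendstoUniformlyOn_sub_of_tendsto_sub (by fun_prop) hlim M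
  rw [Metric.tendstoUniformlyOn_iff] at hunif ⊢
  intro ε hε
  obtain ⟨δ, hδ, hexp⟩ := Metric.continuousAt_iff.mp Real.continuous_exp.continuousAt ε hε
  filter_upwards [Real.tendsto_log_atTop.eventually (hunif δ hδ), eventually_gt_atTop 0]
    with y hy hy0 c hc
  have hc0 : 0 < c := hA.trans_le hc.1
  have hlogc : Real.log c ∈ Icc (-M) M := by
    have := Real.log_le_log hA hc.1
    have := Real.log_le_log hc0 hc.2
    constructor <;> linarith [neg_abs_le (Real.log A), le_abs_self (Real.log B),
      abs_nonneg (Real.log A), abs_nonneg (Real.log B)]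
  have hD : dist (h (Real.log y + Real.log c) - h (Real.log y)) 0 < δ := by
    rw [Real.dist_eq, sub_zero, abs_sub_comm, ← Real.dist_eq]
    simpa using hy _ hlogc
  have := hexp hD
  rw [← Real.exp_log hy0, ← Real.exp_log hc0, hratio]
  simpa [dist_comm] using this

lemma abs_choose_mul_pow_mul_one_sub_pow_le_one (n k : ℕ) {q : ℝ} (h0 : 0 ≤ q) (h1 : q ≤ 1) :
    |(n.choose k : ℝ) * q ^ k * (1 - q) ^ (n - k)| ≤ 1 := by
  have h := ProbabilityTheory.binomial_real_singleton n k ⟨q, h0, h1⟩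
  rw [← h, abs_of_nonneg measureReal_nonneg]
  exact measureReal_le_one

lemma setIntegral_Ioc_div (f : ℝ → ℝ) {a b c : ℝ} (hab : a ≤ b) (hc : 0 < c) :
    ∫ q in Ioc (a / c) (b / c), f q = c⁻¹ * ∫ u in Ioc a b, f (u / c) := by
  rw [← intervalIntegral.integral_of_le hab, ← intervalIntegral.integral_of_le (by gcongr),
    intervalIntegral.integral_comp_div f hc.ne', smul_eq_mul, inv_mul_cancel_left₀ hc.ne']

lemma tendsto_setIntegral_of_forall_norm_le {ι α E : Type*} [MeasurableSpace α]
    [NormedAddCommGroup E] [NormedSpace ℝ E] {μ : Measure α} {l : Filter ι}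
    [l.IsCountablyGenerated] {F : ι → α → E} {g : α → E} {s : Set α} {K : ℝ}
    (hs : MeasurableSet s) (hμs : μ s ≠ ⊤)
    (hF : ∀ᶠ i in l, AEStronglyMeasurable (F i) (μ.restrict s))
    (hbound : ∀ᶠ i in l, ∀ x ∈ s, ‖F i x‖ ≤ K) (hlim : ∀ x ∈ s, Tendsto (F · x) l (𝓝 (g x))) :
    Tendsto (fun i => ∫ x in s, F i x ∂μ) l (𝓝 (∫ x in s, g x ∂μ)) :=
  tendsto_integral_filter_of_dominated_convergence (fun _ => K) hF
    (hbound.mono fun _ hi => (ae_restrict_iff' hs).mpr (ae_of_all _ hi))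
    (integrableOn_const hμs) ((ae_restrict_iff' hs).mpr (ae_of_all _ hlim))

noncomputable def jointIntegrand (L Fbar : ℝ → ℝ) (α' ρ x : ℝ) (a : ℕ → ℝ) (k n : ℕ) (q : ℝ) : ℝ :=
  (n.choose k : ℝ) * q ^ k * (1 - q) ^ (n - k) * Fbar (a n * q ^ (1 / α') * x) * q ^ (-ρ) *
    L (1 / q)

section Scaling

variable {L Fbar : ℝ → ℝ} {α α' ρ β K x u : ℝ} {m : ℕ → ℕ} {a : ℕ → ℝ} {n : ℕ}

lemma scale_rpow_eq (hLpos : ∀ y, 0 < y → 0 < L y) (hα : 0 < α) (hK : 0 < K)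
    (hβ : β = α / α' + ρ - 1) (ha : a n = (K * (n : ℝ) ^ β * (m n : ℝ) * L n) ^ (1 / α))
    (hn : 0 < n) (hu : 0 ≤ u) (hx : 0 ≤ x) :
    (a n * (u / n) ^ (1 / α') * x) ^ α =
      K * u ^ (α / α') * x ^ α * (m n * L n / (n : ℝ) ^ (1 - ρ)) := by
  have hn' : (0 : ℝ) < n := Nat.cast_pos.mpr hn
  have hLn := hLpos n hn'
  have hbase : 0 ≤ K * (n : ℝ) ^ β * (m n : ℝ) * L n := by positivity
  have han : 0 ≤ a n := by rw [ha]; positivity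
  rw [Real.mul_rpow (by positivity) hx, Real.mul_rpow han (by positivity), ha,
    ← Real.rpow_mul hbase, ← Real.rpow_mul (by positivity), one_div_mul_cancel hα.ne',
    Real.rpow_one, one_div_mul_eq_div, Real.div_rpow hu hn'.le,
    show (n : ℝ) ^ β = (n : ℝ) ^ (α / α') / (n : ℝ) ^ (1 - ρ) by
      rw [← Real.rpow_sub hn', hβ]; ring_nf]
  field_simp

lemma tendsto_scale_atTop (hLpos : ∀ y, 0 < y → 0 < L y) (hα : 0 < α) (hK : 0 < K)
    (hβ : β = α / α' + ρ - 1)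
    (hmgrow : Tendsto (fun n : ℕ => (m n : ℝ) * L n / (n : ℝ) ^ (1 - ρ)) atTop atTop)
    (ha : ∀ n : ℕ, a n = (K * (n : ℝ) ^ β * (m n : ℝ) * L n) ^ (1 / α)) (hx : 0 < x) (hu : 0 < u) :
    Tendsto (fun n : ℕ => a n * (u / n) ^ (1 / α') * x) atTop atTop := by
  have hpow : Tendsto (fun n : ℕ => (a n * (u / n) ^ (1 / α') * x) ^ α) atTop atTop :=
    (hmgrow.const_mul_atTop (by positivity : 0 < K * u ^ (α / α') * x ^ α)).congr'
      (by filter_upwards [eventually_gt_atTop 0] with n hn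
          exact (scale_rpow_eq hLpos hα hK hβ (ha n) hn hu.le hx.le).symm)
  refine ((tendsto_rpow_atTop (one_div_pos.mpr hα)).comp hpow).congr' ?_
  filter_upwards [eventually_gt_atTop 0] with n hn
  have hLn := hLpos n (Nat.cast_pos.mpr hn)
  have han : 0 ≤ a n := by rw [ha]; positivity
  rw [Function.comp_apply, one_div α, Real.rpow_rpow_inv (by positivity) hα.ne']

lemma div_mul_jointIntegrand_div_eq (hLpos : ∀ y, 0 < y → 0 < L y) (hα : 0 < α) (hK : 0 < K)
    (hβ : β = α / α' + ρ - 1) (ha : a n = (K * (n : ℝ) ^ β * (m n : ℝ) * L n) ^ (1 / α))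
    (k : ℕ) (hn : 0 < n) (hu : 0 < u) (hx : 0 < x) :
    m n / n * jointIntegrand L Fbar α' ρ x a k n (u / n) =
      n.choose k * (u / n) ^ k * (1 - u / n) ^ (n - k) *
        (Fbar (a n * (u / n) ^ (1 / α') * x) * (a n * (u / n) ^ (1 / α') * x) ^ α) *
        (x ^ (-α) * u ^ (-(1 + β)) / K) * (L (u⁻¹ * n) / L n) := by
  have hn' : (0 : ℝ) < n := Nat.cast_pos.mpr hn
  have hLn := hLpos n hn'
  rw [scale_rpow_eq hLpos hα hK hβ ha hn hu.le hx.le, jointIntegrand,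
    Real.div_rpow hu.le hn'.le (-ρ), Real.rpow_neg hx.le,
    show u ^ (-ρ) = u ^ (α / α') * u ^ (-(1 + β)) by rw [← Real.rpow_add hu, hβ]; ring_nf,
    show (n : ℝ) ^ (-ρ) = n ^ (1 - ρ) / n by
      rw [Real.rpow_sub hn', Real.rpow_one, Real.rpow_neg hn'.le]; field_simp,
    show 1 / (u / n) = u⁻¹ * n by field_simp]
  field_simp

lemma tendsto_div_mul_jointIntegrand_div {C : ℝ} (hLslow : SlowlyVarying L)
    (hLpos : ∀ y, 0 < y → 0 < L y) (hFtail : Tendsto (fun y => y ^ α * Fbar y) atTop (𝓝 C))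
    (hα : 0 < α) (hK : 0 < K) (hβ : β = α / α' + ρ - 1)
    (hmgrow : Tendsto (fun n : ℕ => (m n : ℝ) * L n / (n : ℝ) ^ (1 - ρ)) atTop atTop)
    (ha : ∀ n : ℕ, a n = (K * (n : ℝ) ^ β * (m n : ℝ) * L n) ^ (1 / α)) (k : ℕ) (hx : 0 < x)
    (hu : 0 < u) :
    Tendsto (fun n : ℕ => m n / n * jointIntegrand L Fbar α' ρ x a k n (u / n)) atTop
      (𝓝 (x ^ (-α) * (C / K) * (Real.exp (-u) * u ^ ((k : ℝ) - 1 - β) / k.factorial))) := by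
  have hpoisson : Tendsto (fun n : ℕ => (n.choose k : ℝ) * (u / n) ^ k * (1 - u / n) ^ (n - k))
      atTop (𝓝 (Real.exp (-u) * u ^ k / k.factorial)) :=
    ProbabilityTheory.tendsto_choose_mul_pow_of_tendsto_mul_atTop k <|
      tendsto_const_nhds.congr' <| by
        filter_upwards [eventually_gt_atTop 0] with n hn
        field_simp
  have htail : Tendsto (fun n : ℕ => Fbar (a n * (u / n) ^ (1 / α') * x) *
      (a n * (u / n) ^ (1 / α') * x) ^ α) atTop (𝓝 C) :=
    (hFtail.comp (tendsto_scale_atTop hLpos hα hK hβ hmgrow ha hx hu)).congr fun _ => mul_comm _ _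
  have hslow : Tendsto (fun n : ℕ => L (u⁻¹ * n) / L n) atTop (𝓝 1) :=
    (hLslow _ (inv_pos.mpr hu)).comp tendsto_natCast_atTop_atTop
  have hlimit : Real.exp (-u) * u ^ k / k.factorial * C * (x ^ (-α) * u ^ (-(1 + β)) / K) * 1 =
      x ^ (-α) * (C / K) * (Real.exp (-u) * u ^ ((k : ℝ) - 1 - β) / k.factorial) := by
    rw [show (k : ℝ) - 1 - β = k + -(1 + β) by ring, Real.rpow_add hu, Real.rpow_natCast]
    ring
  rw [← hlimit]
  refine (((hpoisson.mul htail).mul_const _).mul hslow).congr' ?_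
  filter_upwards [eventually_gt_atTop 0] with n hn
  exact (div_mul_jointIntegrand_div_eq hLpos hα hK hβ (ha n) k hn hu hx).symm

lemma exists_eventually_norm_div_mul_jointIntegrand_div_le {C c₁ c₂ : ℝ}
    (hLslow : SlowlyVarying L) (hLmeas : Measurable L) (hLpos : ∀ y, 0 < y → 0 < L y)
    (hFtail : Tendsto (fun y => y ^ α * Fbar y) atTop (𝓝 C)) (hα : 0 < α) (hα' : 0 < α')
    (hK : 0 < K) (hβ : β = α / α' + ρ - 1)
    (hmgrow : Tendsto (fun n : ℕ => (m n : ℝ) * L n / (n : ℝ) ^ (1 - ρ)) atTop atTop)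
    (ha : ∀ n : ℕ, a n = (K * (n : ℝ) ^ β * (m n : ℝ) * L n) ^ (1 / α)) (k : ℕ) (hx : 0 < x)
    (hc₁ : 0 < c₁) (hc₁₂ : c₁ < c₂) :
    ∃ B, ∀ᶠ n : ℕ in atTop, ∀ u ∈ Ioc c₁ c₂,
      ‖m n / n * jointIntegrand L Fbar α' ρ x a k n (u / n)‖ ≤ B := by
  have hc₂ : 0 < c₂ := hc₁.trans hc₁₂
  obtain ⟨W, hW⟩ := isCompact_Icc.exists_bound_of_continuousOn (s := Icc c₁ c₂)
    (f := fun u => x ^ (-α) * u ^ (-(1 + β)) / K) <|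
      (continuousOn_const.mul (continuousOn_id.rpow_const fun u hu =>
        Or.inl (hc₁.trans_le hu.1).ne')).div_const _
  have hW0 : 0 ≤ W := (norm_nonneg _).trans (hW c₁ ⟨le_rfl, hc₁₂.le⟩)
  obtain ⟨T, hT⟩ := eventually_atTop.mp (hFtail.norm.eventually (gt_mem_nhds (lt_add_one ‖C‖)))
  have hratio := Metric.tendstoUniformlyOn_iff.mp
    (hLslow.tendstoUniformlyOn hLmeas hLpos (inv_pos.mpr hc₂) c₁⁻¹) 1 one_pos
  refine ⟨1 * (‖C‖ + 1) * W * 2, ?_⟩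
  filter_upwards [eventually_gt_atTop 0, tendsto_natCast_atTop_atTop.eventually_ge_atTop c₂,
    (tendsto_scale_atTop hLpos hα hK hβ hmgrow ha hx hc₁).eventually_ge_atTop T,
    tendsto_natCast_atTop_atTop.eventually hratio] with n hn hnc₂ hnT hnL u hu
  have hn' : (0 : ℝ) < n := Nat.cast_pos.mpr hn
  have hu0 : 0 < u := hc₁.trans hu.1
  have hLn := hLpos n hn'
  have han : 0 ≤ a n := by rw [ha n]; positivity
  rw [div_mul_jointIntegrand_div_eq hLpos hα hK hβ (ha n) k hn hu0 hx, norm_mul, norm_mul, norm_mul]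
  gcongr
  · exact abs_choose_mul_pow_mul_one_sub_pow_le_one n k (by positivity)
      ((div_le_one hn').mpr (hu.2.trans hnc₂))
  · rw [mul_comm]
    refine (hT _ (hnT.trans ?_)).le
    gcongr
    exact hu.1.le
  · exact hW u (Ioc_subset_Icc_self hu)
  · have := hnL u⁻¹ ⟨inv_anti₀ hu0 hu.2, inv_anti₀ hc₁ hu.1.le⟩
    rw [Pi.one_apply, dist_comm, Real.dist_eq] at this
    rw [Real.norm_eq_abs]
    linarith [abs_sub_abs_le_abs_sub (L (u⁻¹ * n) / L n) 1]

lemma aestronglyMeasurable_jointIntegrand_div (hLmeas : Measurable L)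
    (hFmono : AntitoneOn Fbar (Ioi 0)) (hα' : 0 < α') (han : 0 < a n) (hx : 0 < x) (k : ℕ)
    (hn : 0 < n) :
    AEStronglyMeasurable (fun u => jointIntegrand L Fbar α' ρ x a k n (u / n))
      (volume.restrict (Ioi 0)) := by
  have hn' : (0 : ℝ) < n := Nat.cast_pos.mpr hn
  have hF : AEMeasurable (fun u : ℝ => Fbar (a n * (u / n) ^ (1 / α') * x))
      (volume.restrict (Ioi 0)) :=
    aemeasurable_restrict_of_antitoneOn measurableSet_Ioi fun u (hu : 0 < u) v (hv : 0 < v) huv =>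
      hFmono (mem_Ioi.mpr (by positivity)) (mem_Ioi.mpr (by positivity)) (by gcongr)
  have hbinom : Measurable fun u : ℝ => (n.choose k : ℝ) * (u / n) ^ k * (1 - u / n) ^ (n - k) := by
    fun_prop
  have hpow : Measurable fun u : ℝ => (u / n) ^ (-ρ) := by fun_prop
  have hL : Measurable fun u : ℝ => L (1 / (u / n)) := hLmeas.comp (by fun_prop)
  exact (((hbinom.aemeasurable.mul hF).mul hpow.aemeasurable).mul
    hL.aemeasurable).aestronglyMeasurable

end Scaling

theorem conditional_joint_limit_computation_general
    (L : ℝ → ℝ) (hLmeas : Measurable L) (hLpos : ∀ x : ℝ, 0 < x → 0 < L x)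
    (hLslow : ∀ c : ℝ, 0 < c → Tendsto (fun x : ℝ => L (c * x) / L x) atTop (nhds 1))
    (Fbar : ℝ → ℝ) (hFmono : AntitoneOn Fbar (Set.Ioi 0))
    (α C_X α' ρ : ℝ) (hα : 0 < α) (hC : 0 < C_X)
    (hFtail : Tendsto (fun x : ℝ => x ^ α * Fbar x) atTop (nhds C_X))
    (hα' : 0 < α')
    (β : ℝ) (hβdef : β = α / α' + ρ - 1) (hβ : β ∈ Set.Ioo (0:ℝ) 1)
    (m : ℕ → ℕ) (hm1 : ∀ n, 1 ≤ m n)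
    (hmgrow : Tendsto (fun n : ℕ => (m n : ℝ) * L n / (n : ℝ) ^ (1 - ρ)) atTop atTop)
    (a : ℕ → ℝ)
    (ha : ∀ n : ℕ, a n
      = (C_X * (Real.Gamma (1 - β) / β) * (n : ℝ) ^ β * (m n : ℝ) * L n) ^ (1 / α))
    (k : ℕ) (c₁ c₂ : ℝ) (hc₁ : 0 < c₁) (hc₁₂ : c₁ < c₂)
    (x : ℝ) (hx : 0 < x) :
    Tendsto
      (fun n : ℕ => (m n : ℝ) *
        ∫ q in Set.Ioc (c₁ / (n : ℝ)) (c₂ / (n : ℝ)),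
          (n.choose k : ℝ) * q ^ k * (1 - q) ^ (n - k) *
            Fbar (a n * q ^ (1 / α') * x) * q ^ (-ρ) * L (1 / q))
      atTop
      (nhds (x ^ (-α) * (β / Real.Gamma (1 - β)) *
        ∫ u in Set.Ioc c₁ c₂, Real.exp (-u) * u ^ ((k : ℝ) - 1 - β) / (Nat.factorial k : ℝ))) := by
  obtain ⟨hβ0, hβ1⟩ := hβ
  have hK : 0 < C_X * (Real.Gamma (1 - β) / β) := by
    have := Real.Gamma_pos_of_pos (sub_pos.mpr hβ1)
    positivity
  have han : ∀ n : ℕ, 0 < n → 0 < a n := fun n hn => by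
    have := hLpos n (Nat.cast_pos.mpr hn)
    have : (1 : ℝ) ≤ m n := by exact_mod_cast hm1 n
    rw [ha n]
    positivity
  obtain ⟨B, hB⟩ := exists_eventually_norm_div_mul_jointIntegrand_div_le hLslow hLmeas hLpos
    hFtail hα hα' hK hβdef hmgrow ha k hx hc₁ hc₁₂
  have hlim := tendsto_setIntegral_of_forall_norm_le (μ := volume) measurableSet_Ioc
    measure_Ioc_lt_top.ne
    (by filter_upwards [eventually_gt_atTop 0] with n hn
        exact ((aestronglyMeasurable_jointIntegrand_div hLmeas hFmono hα' (han n hn) hx k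
          hn).const_mul _).mono_set (Ioc_subset_Ioi_self.trans (Ioi_subset_Ioi hc₁.le)))
    hB fun u hu => tendsto_div_mul_jointIntegrand_div hLslow hLpos hFtail hα hK hβdef hmgrow ha
      k hx (hc₁.trans hu.1)
  rw [integral_const_mul, show C_X / (C_X * (Real.Gamma (1 - β) / β)) = β / Real.Gamma (1 - β) by
    field_simp] at hlim
  refine hlim.congr' ?_
  filter_upwards [eventually_gt_atTop 0] with n hn
  change _ = (m n : ℝ) * ∫ q in Ioc (c₁ / n) (c₂ / n), jointIntegrand L Fbar α' ρ x a k n q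
  rw [setIntegral_Ioc_div _ hc₁₂.le (Nat.cast_pos.mpr hn), integral_const_mul]
  ring

/-- Key computation behind the conditional limit theorem: given the exceedance event,
`(τ_n, nq)` converges jointly to `(Q_β, G(Q_β − β))`; for every `k ≥ 1`, `0 < a < b`,
`x > 0`,
`m_n ∫_{a/n}^{b/n} C(n,k) q^k (1−q)^{n−k} F̄(a_n q^{1/α′} x) q^{−ρ} L(1/q) dq
  → x^{−α} (β/Γ(1−β)) ∫_a^b e^{−u} u^{k−1−β}/k! du`. -/
theorem conditional_joint_limit_computation
    (L : ℝ → ℝ) (hLmeas : Measurable L) (hLpos : ∀ x : ℝ, 0 < x → 0 < L x)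
    (hLslow : ∀ c : ℝ, 0 < c → Tendsto (fun x : ℝ => L (c * x) / L x) atTop (nhds 1))
    (Fbar : ℝ → ℝ) (hFmono : AntitoneOn Fbar (Set.Ioi 0))
    (hFrange : ∀ x : ℝ, 0 < x → Fbar x ∈ Set.Icc (0:ℝ) 1)
    (α C_X α' ρ : ℝ) (hα : 0 < α) (hC : 0 < C_X)
    (hFtail : Tendsto (fun x : ℝ => x ^ α * Fbar x) atTop (nhds C_X))
    (hα' : 0 < α') (hρ : ρ < 1)
    (β : ℝ) (hβdef : β = α / α' + ρ - 1) (hβ : β ∈ Set.Ioo (0:ℝ) 1)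
    (m : ℕ → ℕ) (hmmono : StrictMono m) (hm1 : ∀ n, 1 ≤ m n)
    (hmgrow : Tendsto (fun n : ℕ => (m n : ℝ) * L n / (n : ℝ) ^ (1 - ρ)) atTop atTop)
    (a : ℕ → ℝ)
    (ha : ∀ n : ℕ, a n
      = (C_X * (Real.Gamma (1 - β) / β) * (n : ℝ) ^ β * (m n : ℝ) * L n) ^ (1 / α))
    (k : ℕ) (hk : 1 ≤ k) (c₁ c₂ : ℝ) (hc₁ : 0 < c₁) (hc₁₂ : c₁ < c₂)
    (x : ℝ) (hx : 0 < x) :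
    Tendsto
      (fun n : ℕ => (m n : ℝ) *
        ∫ q in Set.Ioc (c₁ / (n : ℝ)) (c₂ / (n : ℝ)),
          (n.choose k : ℝ) * q ^ k * (1 - q) ^ (n - k) *
            Fbar (a n * q ^ (1 / α') * x) * q ^ (-ρ) * L (1 / q))
      atTop
      (nhds (x ^ (-α) * (β / Real.Gamma (1 - β)) *
        ∫ u in Set.Ioc c₁ c₂, Real.exp (-u) * u ^ ((k : ℝ) - 1 - β) / (Nat.factorial k : ℝ))) :=
  conditional_joint_limit_computation_general L hLmeas hLpos hLslow Fbar hFmono α C_X α' ρ hα hC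
    hFtail hα' β hβdef hβ m hm1 hmgrow a ha k c₁ c₂ hc₁ hc₁₂ x hx
end

section
/- Under the stated assumptions, for every x > 0, lim_{δ→0+} limsup_{n→∞} m_n ∫_0^{δ/n} (1 − (1−q)^n) · F̄(a_n q^{1/α'} x) · q^{−ρ} L(1/q) dq = 0. -/
/-!
On `(0, δ/n)` the integrand is bounded by a power of `q`: Bernoulli gives `1 - (1-q)^n ≤ nq`,
the tail assumption gives `F̄(y) ≤ K y^(-α)`, and Potter's bound for the slowly varying `L`
gives `L(1/q) ≤ e^ε L(n) (nq)^(-ε)`. Since `a_n^(-α)` is proportional to `1/(n^β m_n L(n))`,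
the factors `m_n` and `L(n)` cancel and `m_n ∫_0^{δ/n} ⋯ = O(δ^(1-β-ε))` uniformly in large `n`.
Potter's bound itself comes from the uniform convergence theorem for `log ∘ L ∘ exp`, proved by
the classical measure argument: a bad sequence of increments would force two sets of measure
close to `4` inside an interval of length `6` to be disjoint.
-/

open Filter Set MeasureTheory Topology

section UniformConvergence

variable {h : ℝ → ℝ}

lemma eventually_lt_volume_setOf_forall_ge_abs_sub_le
    (hΔ : ∀ t, Tendsto (fun u ↦ h (u + t) - h u) atTop (𝓝 0))
    {v : ℕ → ℝ} (hv : Tendsto v atTop atTop) {ε : ℝ} (hε : 0 < ε) {r : ℝ}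
    (hr : r < 4) :
    ∀ᶠ k in atTop, ENNReal.ofReal r <
      volume {t ∈ Icc (0 : ℝ) 4 | ∀ j ≥ k, |h (v j + t) - h (v j)| ≤ ε} := by
  set E : ℕ → Set ℝ :=
    fun k ↦ {t ∈ Icc (0 : ℝ) 4 | ∀ j ≥ k, |h (v j + t) - h (v j)| ≤ ε}
  have hmono : Monotone E := fun k l hkl t ht ↦ ⟨ht.1, fun j hj ↦ ht.2 j (hkl.trans hj)⟩
  have hunion : ⋃ k, E k = Icc 0 4 := by
    refine (iUnion_subset fun k ↦ sep_subset _ _).antisymm fun t ht ↦ ?_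
    have hsmall := ((hΔ t).comp hv).eventually (eventually_abs_sub_lt 0 hε)
    obtain ⟨k, hk⟩ := eventually_atTop.1 hsmall
    exact mem_iUnion.2 ⟨k, ht, fun j hj ↦ by simpa using (hk j hj).le⟩
  have hlim := tendsto_measure_iUnion_atTop (μ := volume) hmono
  rw [hunion, Real.volume_Icc, sub_zero] at hlim
  exact hlim.eventually_const_lt ((ENNReal.ofReal_lt_ofReal_iff (by norm_num)).2 hr)

theorem exists_forall_abs_sub_le_of_tendsto_sub (hmeas : Measurable h)
    (hΔ : ∀ t, Tendsto (fun u ↦ h (u + t) - h u) atTop (𝓝 0)) {ε : ℝ} (hε : 0 < ε) :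
    ∃ U, ∀ u ≥ U, ∀ c ∈ Icc (0 : ℝ) 2, |h (u + c) - h u| ≤ ε := by
  by_contra! hcon
  choose u hu c hc hbig using fun j : ℕ ↦ hcon j
  have hu_top : Tendsto u atTop atTop := tendsto_atTop_mono hu tendsto_natCast_atTop_atTop
  have huc_top : Tendsto (fun j ↦ u j + c j) atTop atTop :=
    tendsto_atTop_add_right_of_le _ 0 hu_top fun j ↦ (hc j).1
  obtain ⟨k, hE, hF⟩ :=
    ((eventually_lt_volume_setOf_forall_ge_abs_sub_le hΔ hu_top (ε := ε / 4) (by positivity)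
      (r := 7 / 2) (by norm_num)).and
    (eventually_lt_volume_setOf_forall_ge_abs_sub_le hΔ huc_top (ε := ε / 4) (by positivity)
      (r := 7 / 2) (by norm_num))).exists
  set E := {t ∈ Icc (0 : ℝ) 4 | ∀ j ≥ k, |h (u j + t) - h (u j)| ≤ ε / 4}
  set F := {t ∈ Icc (0 : ℝ) 4 | ∀ j ≥ k, |h (u j + c j + t) - h (u j + c j)| ≤ ε / 4}
  have hFmeas : MeasurableSet F := by
    simp only [F, ofPred_and, ofPred_forall]
    exact measurableSet_Icc.inter (.iInter fun j ↦ .iInter fun _ ↦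
      measurableSet_le (by fun_prop) measurable_const)
  -- `E` and the translate `F + c k` are two subsets of `[0, 6]` of total measure `> 7`.
  obtain ⟨t, htE, htF⟩ : (E ∩ (· + -c k) ⁻¹' F).Nonempty := by
    refine nonempty_inter_of_measure_lt_add volume (hFmeas.preimage (measurable_add_const _))
      (s := E) (u := Icc 0 6) (fun t ht ↦ ⟨ht.1.1, by linarith [ht.1.2]⟩)
      (fun t ht ↦ ⟨by linarith [ht.1.1, (hc k).1], by linarith [ht.1.2, (hc k).2]⟩) ?_
    rw [measure_preimage_add_right, Real.volume_Icc]
    calc ENNReal.ofReal (6 - 0) < ENNReal.ofReal (7 / 2) + ENNReal.ofReal (7 / 2) := by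
          rw [← ENNReal.ofReal_add (by norm_num) (by norm_num)]
          exact ENNReal.ofReal_lt_ofReal_iff'.2 ⟨by norm_num, by norm_num⟩
      _ < volume E + volume F := ENNReal.add_lt_add hE hF
  have h₁ := htE.2 k le_rfl
  have h₂ := htF.2 k le_rfl
  rw [show u k + c k + (t + -c k) = u k + t by ring] at h₂
  linarith [hbig k, abs_sub_le (h (u k + c k)) (h (u k + t)) (h (u k)),
    abs_sub_comm (h (u k + c k)) (h (u k + t))]

lemma sub_le_mul_one_add_of_forall_abs_sub_le {U ε : ℝ} (hε : 0 ≤ ε)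
    (hU : ∀ u ≥ U, ∀ c ∈ Icc (0 : ℝ) 2, |h (u + c) - h u| ≤ ε) {u c : ℝ} (hu : U ≤ u)
    (hc : 0 ≤ c) : h (u + c) - h u ≤ ε * (1 + c) := by
  have hsteps : ∀ k : ℕ, h (u + 2 * k) - h u ≤ ε * k := by
    intro k
    induction k with
    | zero => simp
    | succ k ih =>
      have hstep := (abs_le.1 (hU (u + 2 * k) (by linarith [k.cast_nonneg (α := ℝ)]) 2
        ⟨by norm_num, le_rfl⟩)).2
      rw [Nat.cast_succ, mul_add_one, ← add_assoc]
      linarith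
  set k := ⌊c / 2⌋₊
  have hk : (k : ℝ) ≤ c / 2 := Nat.floor_le (by positivity)
  have hrest := (abs_le.1 (hU (u + 2 * k) (by linarith [k.cast_nonneg (α := ℝ)])
    (c - 2 * k) ⟨by linarith, by linarith [Nat.lt_floor_add_one (c / 2)]⟩)).2
  rw [add_add_sub_cancel] at hrest
  nlinarith [hsteps k]

end UniformConvergence

theorem exists_potter_bound {L : ℝ → ℝ} (hLmeas : Measurable L)
    (hLpos : ∀ x, 0 < x → 0 < L x)
    (hLslow : ∀ c : ℝ, 0 < c → Tendsto (fun x ↦ L (c * x) / L x) atTop (𝓝 1))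
    {ε : ℝ} (hε : 0 < ε) :
    ∃ X > 0, ∀ t s, X ≤ t → t ≤ s → L s ≤ Real.exp ε * L t * (s / t) ^ ε := by
  set h : ℝ → ℝ := fun u ↦ Real.log (L (Real.exp u))
  have hΔ : ∀ t, Tendsto (fun u ↦ h (u + t) - h u) atTop (𝓝 0) := by
    intro t
    have hlog := ((Real.continuousAt_log one_ne_zero).tendsto.comp
      ((hLslow _ (Real.exp_pos t)).comp Real.tendsto_exp_atTop))
    rw [Real.log_one] at hlog
    refine hlog.congr fun u ↦ ?_
    simp only [Function.comp_apply, h, Real.exp_add, mul_comm (Real.exp u)]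
    rw [Real.log_div (hLpos _ (by positivity)).ne' (hLpos _ (by positivity)).ne']
  obtain ⟨U, hU⟩ := exists_forall_abs_sub_le_of_tendsto_sub
    (Real.measurable_log.comp (hLmeas.comp Real.measurable_exp)) hΔ hε
  refine ⟨Real.exp U, Real.exp_pos U, fun t s ht hts ↦ ?_⟩
  have ht0 : 0 < t := (Real.exp_pos U).trans_le ht
  have hs0 : 0 < s := ht0.trans_le hts
  have hlog := sub_le_mul_one_add_of_forall_abs_sub_le hε.le hU
    (Real.le_log_iff_exp_le ht0 |>.2 ht) (sub_nonneg.2 (Real.log_le_log ht0 hts))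
  simp only [Function.comp_apply, add_sub_cancel, Real.exp_log hs0, Real.exp_log ht0] at hlog
  calc L s = Real.exp (Real.log (L s)) := (Real.exp_log (hLpos s hs0)).symm
    _ ≤ Real.exp (ε + Real.log (L t) + ε * Real.log (s / t)) := by
        rw [Real.log_div hs0.ne' ht0.ne']
        gcongr
        linarith
    _ = Real.exp ε * L t * (s / t) ^ ε := by
        rw [Real.exp_add, Real.exp_add, Real.exp_log (hLpos t ht0),
          Real.rpow_def_of_pos (div_pos hs0 ht0), mul_comm ε]

lemma exists_le_mul_rpow_neg {F : ℝ → ℝ} {α C : ℝ} (hα : 0 ≤ α)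
    (hF1 : ∀ y, 0 < y → F y ≤ 1) (htail : ∀ᶠ y in atTop, y ^ α * F y ≤ C) :
    ∃ K, ∀ y, 0 < y → F y ≤ K * y ^ (-α) := by
  obtain ⟨Y, hY⟩ := eventually_atTop.1 htail
  refine ⟨max C (max Y 1 ^ α), fun y hy ↦ ?_⟩
  rw [Real.rpow_neg hy.le, ← div_eq_mul_inv, le_div_iff₀ (by positivity), mul_comm]
  rcases le_total (max Y 1) y with hYy | hyY
  · exact (hY y (le_of_max_le_left hYy)).trans (le_max_left _ _)
  · calc y ^ α * F y ≤ y ^ α * 1 := mul_le_mul_of_nonneg_left (hF1 y hy) (by positivity)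
      _ ≤ max Y 1 ^ α := by rw [mul_one]; exact Real.rpow_le_rpow hy.le hyY hα
      _ ≤ _ := le_max_right _ _

lemma exceedance_integrand_le {F L : ℝ → ℝ} {K X α α' ρ ε a x q : ℝ} {n : ℕ}
    (hF0 : ∀ y, 0 < y → 0 ≤ F y) (hFK : ∀ y, 0 < y → F y ≤ K * y ^ (-α))
    (hLpos : ∀ y, 0 < y → 0 < L y) (hX : 0 < X)
    (hpotter : ∀ t s, X ≤ t → t ≤ s → L s ≤ Real.exp ε * L t * (s / t) ^ ε)
    (hXn : X ≤ n) (ha : 0 < a) (hx : 0 < x) (hq : 0 < q) (hnq : n * q ≤ 1) :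
    (1 - (1 - q) ^ n) * F (a * q ^ (1 / α') * x) * q ^ (-ρ) * L (1 / q) ≤
      n * K * a ^ (-α) * x ^ (-α) * Real.exp ε * L n * (n : ℝ) ^ (-ε) *
        q ^ (1 - α / α' - ρ - ε) := by
  have hn1 : (1 : ℝ) ≤ n := Nat.one_le_cast.2 (Nat.cast_pos.1 (hX.trans_le hXn))
  have hq1 : q ≤ 1 := by nlinarith
  have hy : 0 < a * q ^ (1 / α') * x := by positivity
  have hbernoulli : 1 - (1 - q) ^ n ≤ n * q := by
    have := one_add_mul_le_pow (by linarith : (-2 : ℝ) ≤ -q) n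
    rw [← sub_eq_add_neg] at this
    linarith
  have hLq := hpotter n (1 / q) hXn (by rw [le_div_iff₀ hq]; linarith)
  calc _ ≤ (n * q) * (K * (a * q ^ (1 / α') * x) ^ (-α)) * q ^ (-ρ) *
        (Real.exp ε * L n * (1 / q / n) ^ ε) := by
        gcongr ?_ * ?_ * _ * ?_
        · exact (hLpos _ (by positivity)).le
        · exact mul_nonneg (mul_nonneg (by positivity) ((hF0 _ hy).trans (hFK _ hy)))
            (by positivity)
        · exact hF0 _ hy
        · exact hFK _ hy
    _ = _ := by
        rw [Real.mul_rpow (by positivity) hx.le, Real.mul_rpow ha.le (by positivity),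
          ← Real.rpow_mul hq.le, show 1 / α' * -α = -(α / α') by ring,
          Real.div_rpow (by positivity) (by positivity), Real.div_rpow zero_le_one hq.le,
          Real.one_rpow, Real.rpow_sub hq, Real.rpow_sub hq,
          Real.rpow_sub hq, Real.rpow_one, Real.rpow_neg hq.le, Real.rpow_neg n.cast_nonneg,
          Real.rpow_neg hq.le]
        field_simp

lemma setIntegral_Ioo_le_of_le_mul_rpow {f : ℝ → ℝ} {D s η : ℝ} (hs : s < 1) (hη : 0 ≤ η)
    (hf0 : ∀ q ∈ Ioo 0 η, 0 ≤ f q) (hf : ∀ q ∈ Ioo 0 η, f q ≤ D * q ^ (-s)) :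
    ∫ q in Ioo 0 η, f q ≤ D * (η ^ (1 - s) / (1 - s)) := by
  have hint : IntegrableOn (fun q ↦ D * q ^ (-s)) (Ioo 0 η) :=
    (((intervalIntegrable_iff_integrableOn_Ioc_of_le hη).1
      (intervalIntegral.intervalIntegrable_rpow' (by linarith))).mono_set
        Ioo_subset_Ioc_self).const_mul D
  calc ∫ q in Ioo 0 η, f q ≤ ∫ q in Ioo 0 η, D * q ^ (-s) :=
        integral_mono_of_nonneg (ae_restrict_of_forall_mem measurableSet_Ioo hf0) hint
          (ae_restrict_of_forall_mem measurableSet_Ioo hf)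
    _ = D * (η ^ (1 - s) / (1 - s)) := by
        rw [integral_const_mul, ← integral_Ioc_eq_integral_Ioo,
          ← intervalIntegral.integral_of_le hη, integral_rpow (Or.inl (by linarith)),
          Real.zero_rpow (by linarith), neg_add_eq_sub, sub_zero]

lemma mul_integral_exceedance_le {L F : ℝ → ℝ} {α C α' ρ β K X ε a M x δ : ℝ} {n : ℕ}
    (hLpos : ∀ y, 0 < y → 0 < L y) (hF0 : ∀ y, 0 < y → 0 ≤ F y)
    (hFK : ∀ y, 0 < y → F y ≤ K * y ^ (-α)) (hX : 0 < X)
    (hpotter : ∀ t s, X ≤ t → t ≤ s → L s ≤ Real.exp ε * L t * (s / t) ^ ε)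
    (hα : 0 < α) (hC : 0 < C) (hβdef : β = α / α' + ρ - 1) (hβ : β ∈ Ioo 0 1)
    (hβε : β + ε < 1) (hM : 0 < M)
    (ha : a = (C * (Real.Gamma (1 - β) / β) * (n : ℝ) ^ β * M * L n) ^ (1 / α))
    (hx : 0 < x) (hXn : X ≤ n) (hδ : 0 < δ) (hδ1 : δ ≤ 1) :
    M * ∫ q in Ioo 0 (δ / n),
        (1 - (1 - q) ^ n) * F (a * q ^ (1 / α') * x) * q ^ (-ρ) * L (1 / q) ≤
      K * x ^ (-α) * Real.exp ε * β / (C * Real.Gamma (1 - β) * (1 - (β + ε))) *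
        δ ^ (1 - (β + ε)) := by
  obtain ⟨hβ0, hβ1⟩ := hβ
  have hn0 : 0 < (n : ℝ) := hX.trans_le hXn
  have hn1 : (1 : ℝ) ≤ n := Nat.one_le_cast.2 (Nat.cast_pos.1 hn0)
  have hΓ : 0 < Real.Gamma (1 - β) := Real.Gamma_pos_of_pos (by linarith)
  have hLn : 0 < L n := hLpos n hn0
  have hT : 0 < C * (Real.Gamma (1 - β) / β) * (n : ℝ) ^ β * M * L n := by positivity
  have ha0 : 0 < a := ha ▸ Real.rpow_pos_of_pos hT _
  have haα : a ^ (-α) = (C * (Real.Gamma (1 - β) / β) * (n : ℝ) ^ β * M * L n)⁻¹ := by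
    rw [ha, ← Real.rpow_mul hT.le, show 1 / α * -α = -1 by field_simp, Real.rpow_neg_one]
  have hq : ∀ q ∈ Ioo (0 : ℝ) (δ / n), 0 < q ∧ n * q ≤ 1 := fun q hq ↦
    ⟨hq.1, by nlinarith [(lt_div_iff₀' hn0).1 hq.2]⟩
  calc _ ≤ M * (n * K * a ^ (-α) * x ^ (-α) * Real.exp ε * L n * (n : ℝ) ^ (-ε) *
        ((δ / n) ^ (1 - (β + ε)) / (1 - (β + ε)))) := by
        refine mul_le_mul_of_nonneg_left (setIntegral_Ioo_le_of_le_mul_rpow hβε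
          (by positivity) (fun q hq' ↦ ?_) (fun q hq' ↦ ?_)) hM.le
        · obtain ⟨hq0, hnq⟩ := hq q hq'
          have hq1 : q ≤ 1 := by nlinarith
          have hF := hF0 (a * q ^ (1 / α') * x) (by positivity)
          have hL := hLpos (1 / q) (by positivity)
          have hpow := pow_le_one₀ (n := n) (sub_nonneg.2 hq1) (by linarith)
          exact mul_nonneg (mul_nonneg (mul_nonneg (sub_nonneg.2 hpow) hF) (by positivity))
            hL.le
        · exact (exceedance_integrand_le hF0 hFK hLpos hX hpotter hXn ha0 hx (hq q hq').1
            (hq q hq').2).trans_eq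
              (by rw [hβdef, show 1 - α / α' - ρ - ε = -(α / α' + ρ - 1 + ε) by ring])
    _ = _ := by
        rw [haα, Real.div_rpow hδ.le hn0.le, Real.rpow_sub hn0, Real.rpow_add hn0,
          Real.rpow_one, Real.rpow_neg hn0.le]
        field_simp

lemma tendsto_limsup_nhdsGT_zero_of_le_mul_rpow {f : ℝ → ℕ → ENNReal} {C p : ℝ} (hp : 0 < p)
    (hf : ∀ᶠ δ in 𝓝[>] 0, ∀ᶠ n in atTop, f δ n ≤ ENNReal.ofReal (C * δ ^ p)) :
    Tendsto (fun δ ↦ limsup (f δ) atTop) (𝓝[>] 0) (𝓝 0) := by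
  have hlim : Tendsto (fun δ : ℝ ↦ ENNReal.ofReal (C * δ ^ p)) (𝓝[>] 0) (𝓝 0) := by
    have : ContinuousAt (fun δ : ℝ ↦ ENNReal.ofReal (C * δ ^ p)) 0 :=
      ENNReal.continuous_ofReal.continuousAt.comp
        (continuousAt_const.mul (Real.continuousAt_rpow_const 0 p (Or.inr hp.le)))
    simpa [Real.zero_rpow hp.ne'] using this.tendsto.mono_left nhdsWithin_le_nhds
  refine tendsto_of_tendsto_of_tendsto_of_le_of_le' tendsto_const_nhds hlim
    (.of_forall fun _ ↦ zero_le) ?_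
  filter_upwards [hf] with δ hδ using
    limsup_le_of_le (isCoboundedUnder_le_of_le atTop fun _ ↦ zero_le) hδ

theorem exceedance_lower_part_negligible_general
    (L : ℝ → ℝ) (hLmeas : Measurable L) (hLpos : ∀ x : ℝ, 0 < x → 0 < L x)
    (hLslow : ∀ c : ℝ, 0 < c → Tendsto (fun x : ℝ => L (c * x) / L x) atTop (nhds 1))
    (Fbar : ℝ → ℝ)
    (hFrange : ∀ x : ℝ, 0 < x → Fbar x ∈ Set.Icc (0:ℝ) 1)
    (α C_X α' ρ : ℝ) (hα : 0 < α) (hC : 0 < C_X)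
    (hFtail : Tendsto (fun x : ℝ => x ^ α * Fbar x) atTop (nhds C_X))
    (β : ℝ) (hβdef : β = α / α' + ρ - 1) (hβ : β ∈ Set.Ioo (0:ℝ) 1)
    (m : ℕ → ℕ) (hm1 : ∀ n, 1 ≤ m n)
    (a : ℕ → ℝ)
    (ha : ∀ n : ℕ, a n
      = (C_X * (Real.Gamma (1 - β) / β) * (n : ℝ) ^ β * (m n : ℝ) * L n) ^ (1 / α))
    (x : ℝ) (hx : 0 < x) :
    Tendsto
      (fun δ : ℝ => Filter.limsup
        (fun n : ℕ => ENNReal.ofReal ((m n : ℝ) *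
          ∫ q in Set.Ioo (0:ℝ) (δ / (n : ℝ)),
            (1 - (1 - q) ^ n) * Fbar (a n * q ^ (1 / α') * x) * q ^ (-ρ) * L (1 / q)))
        atTop)
      (nhdsWithin (0:ℝ) (Set.Ioi 0)) (nhds (0 : ENNReal)) := by
  obtain ⟨ε, hε, hβε⟩ : ∃ ε > 0, β + ε < 1 :=
    ⟨(1 - β) / 2, by linarith [hβ.2], by linarith [hβ.2]⟩
  obtain ⟨K, hK⟩ := exists_le_mul_rpow_neg hα.le (fun y hy ↦ (hFrange y hy).2)
    (hFtail.eventually (ge_mem_nhds (lt_add_one C_X)))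
  obtain ⟨X, hX, hpotter⟩ := exists_potter_bound hLmeas hLpos hLslow hε
  apply tendsto_limsup_nhdsGT_zero_of_le_mul_rpow (p := 1 - (β + ε)) (by linarith)
  filter_upwards [Ioc_mem_nhdsGT one_pos] with δ hδ
  filter_upwards [eventually_ge_atTop ⌈X⌉₊] with n hn
  exact ENNReal.ofReal_le_ofReal <| mul_integral_exceedance_le hLpos
    (fun y hy ↦ (hFrange y hy).1) hK hX hpotter hα hC hβdef hβ hβε (by exact_mod_cast hm1 n)
    (ha n) hx (Nat.ceil_le.1 hn) hδ.1 hδ.2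

/-- Negligibility of the small-`q` part of the exceedance probability: for every `x > 0`,
`lim_{δ→0+} limsup_{n→∞} m_n ∫_0^{δ/n} (1 − (1−q)^n) F̄(a_n q^{1/α′} x) q^{−ρ} L(1/q) dq = 0`
(the limsup is taken in `ℝ≥0∞`). -/
theorem exceedance_lower_part_negligible
    (L : ℝ → ℝ) (hLmeas : Measurable L) (hLpos : ∀ x : ℝ, 0 < x → 0 < L x)
    (hLslow : ∀ c : ℝ, 0 < c → Tendsto (fun x : ℝ => L (c * x) / L x) atTop (nhds 1))
    (Fbar : ℝ → ℝ) (hFmono : AntitoneOn Fbar (Set.Ioi 0))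
    (hFrange : ∀ x : ℝ, 0 < x → Fbar x ∈ Set.Icc (0:ℝ) 1)
    (α C_X α' ρ : ℝ) (hα : 0 < α) (hC : 0 < C_X)
    (hFtail : Tendsto (fun x : ℝ => x ^ α * Fbar x) atTop (nhds C_X))
    (hα' : 0 < α') (hρ : ρ < 1)
    (β : ℝ) (hβdef : β = α / α' + ρ - 1) (hβ : β ∈ Set.Ioo (0:ℝ) 1)
    (m : ℕ → ℕ) (hmmono : StrictMono m) (hm1 : ∀ n, 1 ≤ m n)
    (hmgrow : Tendsto (fun n : ℕ => (m n : ℝ) * L n / (n : ℝ) ^ (1 - ρ)) atTop atTop)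
    (a : ℕ → ℝ)
    (ha : ∀ n : ℕ, a n
      = (C_X * (Real.Gamma (1 - β) / β) * (n : ℝ) ^ β * (m n : ℝ) * L n) ^ (1 / α))
    (x : ℝ) (hx : 0 < x) :
    Tendsto
      (fun δ : ℝ => Filter.limsup
        (fun n : ℕ => ENNReal.ofReal ((m n : ℝ) *
          ∫ q in Set.Ioo (0:ℝ) (δ / (n : ℝ)),
            (1 - (1 - q) ^ n) * Fbar (a n * q ^ (1 / α') * x) * q ^ (-ρ) * L (1 / q)))
        atTop)
      (nhdsWithin (0:ℝ) (Set.Ioi 0)) (nhds (0 : ENNReal)) :=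
  exceedance_lower_part_negligible_general L hLmeas hLpos hLslow Fbar hFrange α C_X α' ρ hα hC
    hFtail β hβdef hβ m hm1 a ha x hx
end

section
/- Let X be a real random variable such that lim_{x→∞} x² P(|X| > x) = C for some constant C ∈ (0, ∞). Then there exists a constant C' > 0 such that E[ X² · 1{|X| < x} ] ≤ 1 + C' max(log x, 0) for all x > 0. -/
/-!
By the layer-cake formula, `E[X² 1{|X| < x}] ≤ E[min(X², M)] = ∫₀^M P(X² > s) ds` with
`M = max(x², 1)`. The tail hypothesis gives `P(X² > s) ≤ K / s` for all `s > 0`, so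
splitting the integral at `s = 1` bounds it by `1 + K log M = 1 + 2K max(log x, 0)`.
-/

open MeasureTheory ProbabilityTheory Filter Set

section TruncatedMoments

variable {Ω : Type*} [MeasurableSpace Ω] {μ : Measure Ω}

lemma exists_measureReal_abs_gt_le_div_sq [IsProbabilityMeasure μ] {X : Ω → ℝ} {M : ℝ}
    (hM : ∀ᶠ x in atTop, x ^ 2 * μ.real {ω | x < |X ω|} ≤ M) :
    ∃ K : ℝ, 0 < K ∧ ∀ t > 0, μ.real {ω | t < |X ω|} ≤ K / t ^ 2 := by
  obtain ⟨x₀, hx₀⟩ := eventually_atTop.1 hM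
  refine ⟨max (max M 1) (x₀ ^ 2), by positivity, fun t ht => ?_⟩
  rw [le_div_iff₀ (by positivity), mul_comm]
  rcases le_or_gt x₀ t with h | h
  · exact (hx₀ t h).trans ((le_max_left _ _).trans (le_max_left _ _))
  · calc t ^ 2 * μ.real {ω | t < |X ω|} ≤ x₀ ^ 2 * 1 :=
          mul_le_mul (pow_le_pow_left₀ ht.le h.le 2) measureReal_le_one (by positivity)
            (by positivity)
      _ ≤ _ := by rw [mul_one]; exact le_max_right _ _

lemma measureReal_lt_sq_le_div [IsFiniteMeasure μ] {X : Ω → ℝ} {K : ℝ}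
    (hK : ∀ t > 0, μ.real {ω | t < |X ω|} ≤ K / t ^ 2) (s : ℝ) (hs : 0 < s) :
    μ.real {ω | s < X ω ^ 2} ≤ K / s :=
  calc μ.real {ω | s < X ω ^ 2} ≤ μ.real {ω | √s < |X ω|} :=
        measureReal_mono fun ω (h : s < X ω ^ 2) => show √s < |X ω| by
          simpa only [Real.sqrt_sq_eq_abs] using Real.sqrt_lt_sqrt hs.le h
    _ ≤ K / s := by simpa only [Real.sq_sqrt hs.le] using hK √s (Real.sqrt_pos.2 hs)

lemma integrable_min_const [IsFiniteMeasure μ] {Y : Ω → ℝ} (hY : AEMeasurable Y μ)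
    (hY0 : 0 ≤ᵐ[μ] Y) {M : ℝ} (hM : 0 ≤ M) : Integrable (fun ω => min (Y ω) M) μ := by
  refine .of_bound (hY.min aemeasurable_const).aestronglyMeasurable M ?_
  filter_upwards [hY0] with ω h
  rw [Real.norm_of_nonneg (le_min h hM)]
  exact min_le_right _ _

lemma integral_min_le_one_add_mul_log [IsProbabilityMeasure μ] {Y : Ω → ℝ}
    (hY : AEMeasurable Y μ) (hY0 : 0 ≤ᵐ[μ] Y) {K M : ℝ}
    (hK : ∀ t > 0, μ.real {ω | t < Y ω} ≤ K / t) (hM : 1 ≤ M) :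
    ∫ ω, min (Y ω) M ∂μ ≤ 1 + K * Real.log M := by
  set G : ℝ → ℝ := fun t => μ.real {ω | t < min (Y ω) M}
  have hG_int : ∀ a b, IntervalIntegrable G volume a b := fun _ _ =>
    Antitone.intervalIntegrable fun s t hst => measureReal_mono fun ω h => hst.trans_lt h
  have hmin_nonneg : 0 ≤ᵐ[μ] fun ω => min (Y ω) M :=
    hY0.mono fun ω h => le_min h (zero_le_one.trans hM)
  have hlayer : ∫ ω, min (Y ω) M ∂μ = ∫ t in 0..M, G t := by
    rw [(integrable_min_const hY hY0 (zero_le_one.trans hM)).integral_eq_integral_meas_lt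
        hmin_nonneg, intervalIntegral.integral_of_le (zero_le_one.trans hM)]
    refine setIntegral_eq_of_subset_of_forall_sdiff_eq_zero measurableSet_Ioi
      Ioc_subset_Ioi_self fun t ht => ?_
    have hMt : M < t := by simp_all
    have hempty : {ω | t < min (Y ω) M} = ∅ :=
      eq_empty_of_forall_notMem fun ω h => (min_le_right (Y ω) M).not_gt (hMt.trans h)
    rw [hempty, measureReal_empty]
  calc ∫ ω, min (Y ω) M ∂μ = (∫ t in 0..1, G t) + ∫ t in 1..M, G t := by
        rw [hlayer, intervalIntegral.integral_add_adjacent_intervals (hG_int _ _) (hG_int _ _)]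
    _ ≤ (∫ _ in (0 : ℝ)..1, (1 : ℝ)) + ∫ t in 1..M, K * t⁻¹ := by
        gcongr
        · exact intervalIntegral.integral_mono_on zero_le_one (hG_int _ _)
            intervalIntegrable_const fun t _ => measureReal_le_one
        · refine intervalIntegral.integral_mono_on hM (hG_int _ _) ?_ fun t ht => ?_
          · refine (intervalIntegral.intervalIntegrable_inv (fun t ht => ?_)
              continuousOn_id).const_mul K
            rw [uIcc_of_le hM] at ht
            exact (zero_lt_one.trans_le ht.1).ne'
          · have ht0 : 0 < t := zero_lt_one.trans_le ht.1
            calc G t ≤ μ.real {ω | t < Y ω} :=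
                  measureReal_mono fun ω (h : t < min (Y ω) M) => h.trans_le (min_le_left _ _)
              _ ≤ K * t⁻¹ := (hK t ht0).trans_eq (div_eq_mul_inv _ _)
    _ = 1 + K * Real.log M := by
        rw [intervalIntegral.integral_const_mul, integral_inv_of_pos zero_lt_one
          (zero_lt_one.trans_le hM), div_one]
        simp

end TruncatedMoments

lemma Real.log_max_sq_one {x : ℝ} (hx : 0 < x) :
    Real.log (max (x ^ 2) 1) = 2 * max (Real.log x) 0 := by
  rcases le_total x 1 with h | h
  · rw [max_eq_right (pow_le_one₀ hx.le h), max_eq_right (Real.log_nonpos hx.le h),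
      Real.log_one, mul_zero]
  · rw [max_eq_left (one_le_pow₀ h), max_eq_left (Real.log_nonneg h), Real.log_pow]
    norm_num

theorem truncated_second_moment_log_bound_general
    {Ω : Type*} [MeasureSpace Ω] [IsProbabilityMeasure (ℙ : Measure Ω)]
    (X : Ω → ℝ) (hX : Measurable X) (C : ℝ)
    (htail : Tendsto (fun x : ℝ => x ^ 2 * (ℙ {ω : Ω | |X ω| > x}).toReal) atTop (nhds C)) :
    ∃ C' : ℝ, 0 < C' ∧ ∀ x : ℝ, 0 < x →
      (∫ ω, (if |X ω| < x then (X ω) ^ 2 else 0) ∂ℙ) ≤ 1 + C' * max (Real.log x) 0 := by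
  obtain ⟨K, hK0, hK⟩ :=
    exists_measureReal_abs_gt_le_div_sq (htail.eventually_le_const (lt_add_one C))
  refine ⟨2 * K, by positivity, fun x hx => ?_⟩
  set M := max (x ^ 2) 1
  have htrunc : ∀ ω, (if |X ω| < x then X ω ^ 2 else 0) ≤ min (X ω ^ 2) M := fun ω => by
    split_ifs with h
    · refine le_min le_rfl ((?_ : X ω ^ 2 ≤ x ^ 2).trans (le_max_left _ _))
      rw [← sq_abs]
      exact pow_le_pow_left₀ (abs_nonneg _) h.le 2
    · positivity
  calc (∫ ω, (if |X ω| < x then X ω ^ 2 else 0) ∂ℙ)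
        ≤ ∫ ω, min (X ω ^ 2) M ∂ℙ := by
        refine integral_mono_of_nonneg (.of_forall fun ω => ?_) ?_ (.of_forall htrunc)
        · simp only [Pi.zero_apply]
          split_ifs <;> positivity
        · exact integrable_min_const (hX.pow_const 2).aemeasurable
            (.of_forall fun ω => sq_nonneg _) (by positivity)
    _ ≤ 1 + K * Real.log M := integral_min_le_one_add_mul_log (hX.pow_const 2).aemeasurable
          (.of_forall fun ω => sq_nonneg _) (measureReal_lt_sq_le_div hK) (le_max_right _ _)
    _ = 1 + 2 * K * max (Real.log x) 0 := by rw [Real.log_max_sq_one hx]; ring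

/-- Truncated-second-moment bound for a regularly varying tail of index `−2`:
if `x² P(|X| > x) → C ∈ (0,∞)` as `x → ∞`, then there is `C' > 0` with
`E[X² 1{|X| < x}] ≤ 1 + C' max(log x, 0)` for all `x > 0`. -/
theorem truncated_second_moment_log_bound
    {Ω : Type*} [MeasureSpace Ω] [IsProbabilityMeasure (ℙ : Measure Ω)]
    (X : Ω → ℝ) (hX : Measurable X) (C : ℝ) (hC : 0 < C)
    (htail : Tendsto (fun x : ℝ => x ^ 2 * (ℙ {ω : Ω | |X ω| > x}).toReal) atTop (nhds C)) :
    ∃ C' : ℝ, 0 < C' ∧ ∀ x : ℝ, 0 < x →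
      (∫ ω, (if |X ω| < x then (X ω) ^ 2 else 0) ∂ℙ) ≤ 1 + C' * max (Real.log x) 0 :=
  truncated_second_moment_log_bound_general X hX C htail
end
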